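/- arXiv:1101.4887 — 2 statements merged into one kernel-verified Lean document; each statement's English description precedes it below -/
import Mathlib

section
/- Let μ be a probability measure on ℝ whose density is log-concave, and let H be a closed half-line [m, ∞) where m is the mean of μ. Then μ(H) ≥ e^{-1}. -/
/-!
Let `G t = μ [t, ∞)` and `p = G m`. For a log-concave density `f` the hazard rate `f / G` is
nondecreasing, so `G` lies below its exponential tangent at the mean:
`G t ≤ p * exp (-c * (t - m))` with `c = f m / p`. By the layer-cake formula,
`E (X - m)⁺ = ∫₀^∞ G (m + t) dt ≤ p / c`, while
`E (m - X)⁺ ≥ ∫₀^{-log p / c} (1 - p * exp (c * t)) dt = (p - 1 - log p) / c`.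
Both expectations agree because `m` is the mean, hence `-log p ≤ 1`.
The same tangent bounds, for `f` and its reflection, make `X` integrable, so `m` is a genuine mean.
-/

open MeasureTheory Set Real

lemma ConvexOn.map_add_add_map_le {s : Set ℝ} {g : ℝ → ℝ} (hg : ConvexOn ℝ s g) {x y δ : ℝ}
    (hx : x ∈ s) (hy : y + δ ∈ s) (hxy : x ≤ y) (hδ : 0 ≤ δ) :
    g (x + δ) + g y ≤ g x + g (y + δ) := by
  rcases (add_nonneg (sub_nonneg.2 hxy) hδ).eq_or_lt with hD | hD
  · obtain rfl : y = x := by linarith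
    obtain rfl : δ = 0 := by linarith
    rw [add_comm]
  · set θ := δ / (y - x + δ)
    have hθ0 : 0 ≤ θ := by positivity
    have hθ1 : θ ≤ 1 := div_le_one_of_le₀ (by linarith) hD.le
    have h₁ := hg.2 hx hy (sub_nonneg.2 hθ1) hθ0 (by ring)
    have h₂ := hg.2 hx hy hθ0 (sub_nonneg.2 hθ1) (by ring)
    have e₁ : (1 - θ) • x + θ • (y + δ) = x + δ := by
      simp only [θ, smul_eq_mul]; field_simp; ring
    have e₂ : θ • x + (1 - θ) • (y + δ) = y := by
      simp only [θ, smul_eq_mul]; field_simp; ring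
    rw [e₁] at h₁
    rw [e₂] at h₂
    simp only [smul_eq_mul] at h₁ h₂
    linarith

noncomputable def upperTail (f : ℝ → ℝ) (t : ℝ) : ℝ := ∫ x in Ici t, f x

section UpperTail

variable {f : ℝ → ℝ}

lemma upperTail_pos (hpos : ∀ x, 0 < f x) (hint : Integrable f) (t : ℝ) :
    0 < upperTail f t := by
  rw [upperTail, setIntegral_pos_iff_support_of_nonneg_ae (.of_forall fun x => (hpos x).le)
    hint.integrableOn, Function.support_eq_univ fun x => (hpos x).ne', univ_inter]
  simp

lemma upperTail_comp_neg (f : ℝ → ℝ) (t : ℝ) :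
    upperTail (fun x => f (-x)) (-t) = ∫ x in Iic t, f x := by
  rw [upperTail, integral_Ici_eq_integral_Ioi, integral_comp_neg_Ioi, neg_neg]

lemma hasDerivAt_upperTail (hcont : Continuous f) (hint : Integrable f) (t : ℝ) :
    HasDerivAt (upperTail f) (-f t) t := by
  have h : upperTail f = fun u => upperTail f 0 - ∫ x in 0..u, f x := funext fun u => by
    rw [upperTail, upperTail, ← intervalIntegral.integral_Ici_sub_Ici' hint.integrableOn
      hint.integrableOn, sub_sub_cancel]
  rw [h]
  exact (intervalIntegral.integral_hasDerivAt_right (hcont.intervalIntegrable _ _)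
    hcont.aestronglyMeasurable.stronglyMeasurableAtFilter hcont.continuousAt).const_sub _

lemma upperTail_le_mul_exp (hcont : Continuous f) (hint : Integrable f) {a : ℝ}
    (ha : 0 < upperTail f a)
    (hhaz : ∀ s t, s ≤ t → f s * upperTail f t ≤ f t * upperTail f s) (t : ℝ) :
    upperTail f t ≤ upperTail f a * exp (-(f a / upperTail f a) * (t - a)) := by
  set G := upperTail f
  set c := f a / G a
  -- `ψ' = e^{c (u - a)} (c G - f)` changes sign at `a`, as the hazard rate `f / G` equals `c` there.
  set ψ := fun u => G u * exp (c * (u - a))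
  have hψ (u : ℝ) : HasDerivAt ψ (exp (c * (u - a)) * (c * G u - f u)) u := by
    have hexp : HasDerivAt (fun u => exp (c * (u - a))) (exp (c * (u - a)) * c) u :=
      (((hasDerivAt_id u).sub_const a).const_mul c).exp.congr_deriv (by simp)
    exact ((hasDerivAt_upperTail hcont hint u).mul hexp).congr_deriv (by ring)
  have hψc : Continuous ψ := continuous_iff_continuousAt.2 fun u => (hψ u).continuousAt
  have hmono : MonotoneOn ψ (Iic a) := by
    refine monotoneOn_of_hasDerivWithinAt_nonneg (convex_Iic a) hψc.continuousOn
      (fun u _ => (hψ u).hasDerivWithinAt) fun u hu => ?_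
    rw [interior_Iic] at hu
    have : f u ≤ c * G u := by
      rw [div_mul_eq_mul_div, le_div_iff₀ ha]; exact hhaz u a hu.le
    exact mul_nonneg (exp_pos _).le (by linarith)
  have hanti : AntitoneOn ψ (Ici a) := by
    refine antitoneOn_of_hasDerivWithinAt_nonpos (convex_Ici a) hψc.continuousOn
      (fun u _ => (hψ u).hasDerivWithinAt) fun u hu => ?_
    rw [interior_Ici] at hu
    have : c * G u ≤ f u := by
      rw [div_mul_eq_mul_div, div_le_iff₀ ha]; exact hhaz a u hu.le
    exact mul_nonpos_of_nonneg_of_nonpos (exp_pos _).le (by linarith)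
  have hψt : ψ t ≤ G a := by
    rcases le_total t a with h | h
    · simpa [ψ] using hmono h self_mem_Iic h
    · simpa [ψ] using hanti self_mem_Ici h h
  calc G t = ψ t * exp (-c * (t - a)) := by simp only [ψ, mul_assoc, ← exp_add]; ring_nf; simp
    _ ≤ G a * exp (-c * (t - a)) := by gcongr

end UpperTail

section LogConcave

variable {f g : ℝ → ℝ}

lemma continuous_of_convexOn_of_eq_exp_neg (hg : ConvexOn ℝ univ g)
    (hf : ∀ x, f x = exp (-g x)) : Continuous f := by
  rw [funext hf]
  exact (continuousOn_univ.1 (hg.continuousOn isOpen_univ)).neg.rexp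

lemma mul_upperTail_le_of_convexOn (hg : ConvexOn ℝ univ g) (hf : ∀ x, f x = exp (-g x))
    (hint : Integrable f) {s t : ℝ} (hst : s ≤ t) :
    f s * upperTail f t ≤ f t * upperTail f s := by
  have hshift : upperTail f t = ∫ y in Ici s, f (y + (t - s)) := by
    rw [upperTail, ← (measurePreserving_add_right volume (t - s)).setIntegral_preimage_emb
      (measurableEmbedding_addRight _), preimage_add_const_Ici, sub_sub_cancel]
  rw [hshift, upperTail, ← integral_const_mul, ← integral_const_mul]
  refine setIntegral_mono_on ((hint.comp_add_right _).const_mul _).integrableOn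
    (hint.const_mul _).integrableOn measurableSet_Ici fun y hy => ?_
  have := hg.map_add_add_map_le (mem_univ s) (mem_univ _) (mem_Ici.1 hy) (sub_nonneg.2 hst)
  rw [add_sub_cancel] at this
  simp only [hf, ← exp_add, exp_le_exp]
  linarith

lemma upperTail_le_mul_exp_of_convexOn (hg : ConvexOn ℝ univ g) (hf : ∀ x, f x = exp (-g x))
    (hint : Integrable f) (a t : ℝ) :
    upperTail f t ≤ upperTail f a * exp (-(f a / upperTail f a) * (t - a)) :=
  upperTail_le_mul_exp (continuous_of_convexOn_of_eq_exp_neg hg hf) hint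
    (upperTail_pos (fun x => hf x ▸ exp_pos _) hint a)
    (fun _ _ => mul_upperTail_le_of_convexOn hg hf hint) t

end LogConcave

section Density

variable {α : Type*} [MeasurableSpace α] {ν : Measure α} {f : α → ℝ}

lemma measureReal_withDensity_ofReal (hf : 0 ≤ᵐ[ν] f) (hfm : AEStronglyMeasurable f ν)
    {s : Set α} (hs : MeasurableSet s) :
    (ν.withDensity fun x => ENNReal.ofReal (f x)).real s = ∫ x in s, f x ∂ν := by
  rw [measureReal_def, withDensity_apply _ hs,
    integral_eq_lintegral_of_nonneg_ae (ae_restrict_of_ae hf) hfm.restrict]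

lemma integrable_of_isFiniteMeasure_withDensity_ofReal (hf : 0 ≤ᵐ[ν] f)
    (hfm : AEStronglyMeasurable f ν)
    [IsFiniteMeasure (ν.withDensity fun x => ENNReal.ofReal (f x))] : Integrable f ν := by
  refine ⟨hfm, (hasFiniteIntegral_iff_ofReal hf).2 ?_⟩
  simpa using measure_lt_top (ν.withDensity fun x => ENNReal.ofReal (f x)) univ

end Density

lemma integrable_id_of_measureReal_le_exp {μ : Measure ℝ} [IsFiniteMeasure μ] {C c C' c' : ℝ}
    (hc : 0 < c) (hc' : 0 < c') (hup : ∀ t, μ.real (Ici t) ≤ C * exp (-c * t))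
    (hlow : ∀ t, μ.real (Iic t) ≤ C' * exp (c' * t)) : Integrable id μ := by
  have hbound (t : ℝ) : μ {x | t < |x|} ≤
      ENNReal.ofReal (C * exp (-c * t)) + ENNReal.ofReal (C' * exp (-c' * t)) :=
    calc μ {x | t < |x|} ≤ μ (Ici t ∪ Iic (-t)) :=
          measure_mono fun x (hx : t < |x|) => (lt_abs.1 hx).imp le_of_lt fun h => by
            rw [mem_Iic]; linarith
      _ ≤ μ (Ici t) + μ (Iic (-t)) := measure_union_le _ _
      _ ≤ _ := by
          rw [← ofReal_measureReal, ← ofReal_measureReal]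
          gcongr
          · exact hup t
          · simpa using hlow (-t)
  refine ⟨aestronglyMeasurable_id, (hasFiniteIntegral_iff_norm _).2 ?_⟩
  simp only [id, Real.norm_eq_abs]
  rw [lintegral_eq_lintegral_meas_lt μ (.of_forall fun x => abs_nonneg x) (by fun_prop)]
  refine (lintegral_mono hbound).trans_lt ?_
  rw [lintegral_add_left (by fun_prop)]
  exact ENNReal.add_lt_top.2
    ⟨IntegrableOn.setLIntegral_lt_top ((exp_neg_integrableOn_Ioi 0 hc).const_mul C),
      IntegrableOn.setLIntegral_lt_top ((exp_neg_integrableOn_Ioi 0 hc').const_mul C')⟩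

lemma integrable_id_withDensity_of_convexOn {f g : ℝ → ℝ} (hg : ConvexOn ℝ univ g)
    (hf : ∀ x, f x = exp (-g x)) (hint : Integrable f) :
    Integrable id (volume.withDensity fun x => ENNReal.ofReal (f x)) := by
  have hg' : ConvexOn ℝ univ (fun x => g (-x)) := by
    refine ⟨convex_univ, fun x _ y _ a b ha hb hab => ?_⟩
    convert hg.2 (mem_univ (-x)) (mem_univ (-y)) ha hb hab using 2
    simp only [smul_eq_mul]; ring
  have hpos : ∀ x, 0 < f x := fun x => hf x ▸ exp_pos _
  have hpos' : ∀ x, 0 < f (-x) := fun x => hpos (-x)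
  have hint' : Integrable (fun x => f (-x)) := hint.comp_neg
  have hf0 : 0 ≤ᵐ[volume] f := .of_forall fun x => (hpos x).le
  have hfm := (continuous_of_convexOn_of_eq_exp_neg hg hf).aestronglyMeasurable (μ := volume)
  have : IsFiniteMeasure (volume.withDensity fun x => ENNReal.ofReal (f x)) :=
    isFiniteMeasure_withDensity_ofReal hint.2
  refine integrable_id_of_measureReal_le_exp (C := upperTail f 0) (c := f 0 / upperTail f 0)
    (C' := upperTail (fun x => f (-x)) 0) (c' := f 0 / upperTail (fun x => f (-x)) 0)
    (div_pos (hpos 0) (upperTail_pos hpos hint 0))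
    (div_pos (hpos 0) (upperTail_pos hpos' hint' 0)) (fun t => ?_) (fun t => ?_)
  · rw [measureReal_withDensity_ofReal hf0 hfm measurableSet_Ici]
    have h := upperTail_le_mul_exp_of_convexOn hg hf hint 0 t
    rwa [sub_zero] at h
  · rw [measureReal_withDensity_ofReal hf0 hfm measurableSet_Iic, ← upperTail_comp_neg]
    simpa using upperTail_le_mul_exp_of_convexOn hg' (fun x => hf (-x)) hint' 0 (-t)

section Mean

variable {μ : Measure ℝ} {m : ℝ}

lemma integral_max_sub_eq_integral_max_sub [IsProbabilityMeasure μ] (hint : Integrable id μ)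
    (hm : ∫ x, x ∂μ = m) : ∫ x, max (x - m) 0 ∂μ = ∫ x, max (m - x) 0 ∂μ := by
  have hpt (x : ℝ) : max (x - m) 0 - max (m - x) 0 = x - m := by
    rcases le_total x m with h | h
    · rw [max_eq_right (by linarith), max_eq_left (by linarith)]; ring
    · rw [max_eq_left (by linarith), max_eq_right (by linarith)]; ring
  have hpos : Integrable (fun x => max (x - m) 0) μ := (hint.sub (integrable_const m)).pos_part
  have hneg : Integrable (fun x => max (m - x) 0) μ := ((integrable_const m).sub hint).pos_part
  rw [← sub_eq_zero, ← integral_sub hpos hneg]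
  simp only [hpt]
  rw [integral_sub (f := fun x => x) hint (integrable_const m)]
  simp [hm]

lemma integral_max_sub_le_of_measureReal_Ici_le [IsFiniteMeasure μ] (hint : Integrable id μ)
    {C c : ℝ} (hc : 0 < c) (htail : ∀ t, m ≤ t → μ.real (Ici t) ≤ C * exp (-c * (t - m))) :
    ∫ x, max (x - m) 0 ∂μ ≤ C / c := by
  have hpos : Integrable (fun x => max (x - m) 0) μ := (hint.sub (integrable_const m)).pos_part
  rw [hpos.integral_eq_integral_meas_le (.of_forall fun x => le_max_right _ _)]
  calc ∫ t in Ioi 0, μ.real {x | t ≤ max (x - m) 0}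
      ≤ ∫ t in Ioi 0, C * exp (-c * t) := by
        refine integral_mono_of_nonneg (.of_forall fun t => measureReal_nonneg)
          ((exp_neg_integrableOn_Ioi 0 hc).const_mul C) ?_
        filter_upwards [self_mem_ae_restrict measurableSet_Ioi] with t ht
        have hsub : {x | t ≤ max (x - m) 0} ⊆ Ici (m + t) := fun x hx => by
          have := (le_max_iff.1 hx).resolve_right (not_le.2 (mem_Ioi.1 ht))
          exact mem_Ici.2 (by linarith)
        calc μ.real {x | t ≤ max (x - m) 0} ≤ μ.real (Ici (m + t)) := measureReal_mono hsub
          _ ≤ C * exp (-c * t) := by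
            simpa using htail (m + t) (by linarith [mem_Ioi.1 ht])
    _ = C / c := by
      rw [integral_const_mul, integral_exp_mul_Ioi (by linarith) 0]
      field_simp
      simp

lemma integral_one_sub_mul_exp (C c : ℝ) (hc : 0 < c) (hC : 0 < C) :
    ∫ t in (0 : ℝ)..(-log C / c), (1 - C * exp (c * t)) = (C - 1 - log C) / c := by
  have hF (t : ℝ) : HasDerivAt (fun t => t - C * exp (c * t) / c) (1 - C * exp (c * t)) t := by
    have := (((hasDerivAt_id t).const_mul c).exp.const_mul C).div_const c
    exact ((hasDerivAt_id t).sub this).congr_deriv (by field_simp; simp)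
  rw [intervalIntegral.integral_eq_sub_of_hasDerivAt (fun t _ => hF t)
    ((by fun_prop : Continuous fun t => 1 - C * exp (c * t)).intervalIntegrable _ _)]
  have : exp (c * (-log C / c)) = C⁻¹ := by
    rw [mul_div_cancel₀ _ hc.ne', exp_neg, exp_log hC]
  simp only [this, mul_zero, exp_zero]
  field_simp
  ring

lemma le_integral_max_sub_of_measureReal_Ici_le [IsProbabilityMeasure μ]
    (hint : Integrable id μ) {C c : ℝ} (hc : 0 < c) (hC0 : 0 < C) (hC1 : C ≤ 1)
    (htail : ∀ t, t ≤ m → μ.real (Ici t) ≤ C * exp (-c * (t - m))) :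
    (C - 1 - log C) / c ≤ ∫ x, max (m - x) 0 ∂μ := by
  -- `T` is where `1 - C * exp (c * t)` vanishes; truncating `(m - x)⁺` at `T` keeps only `t ≤ T`.
  set T := -log C / c
  have hT : 0 ≤ T := div_nonneg (neg_nonneg.2 (log_nonpos hC0.le hC1)) hc.le
  have hneg : Integrable (fun x => max (m - x) 0) μ := ((integrable_const m).sub hint).pos_part
  have htrunc : Integrable (fun x => min (max (m - x) 0) T) μ :=
    hneg.mono' (by fun_prop) (.of_forall fun x => by
      rw [norm_of_nonneg (le_min (le_max_right _ _) hT)]; exact min_le_left _ _)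
  have hlevel (t : ℝ) (ht : t ∈ Ioc 0 T) : {x | t ≤ min (max (m - x) 0) T} = Iic (m - t) := by
    ext x
    simp only [mem_ofPred_eq, mem_Iic, le_min_iff, le_max_iff, ht.2, and_true]
    constructor
    · rintro (h | h) <;> linarith [ht.1]
    · intro h; left; linarith
  have hbound (t : ℝ) (ht : t ∈ Icc 0 T) : 1 - C * exp (c * t) ≤ μ.real (Iic (m - t)) := by
    have hcompl : μ.real (Iic (m - t)) = 1 - μ.real (Ioi (m - t)) := by
      rw [← compl_Ioi, probReal_compl_eq_one_sub measurableSet_Ioi]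
    have hle := htail (m - t) (by linarith [ht.1])
    rw [show -c * (m - t - m) = c * t by ring] at hle
    linarith [measureReal_mono (μ := μ) (Ioi_subset_Ici_self (a := m - t))]
  calc (C - 1 - log C) / c = ∫ t in (0 : ℝ)..T, (1 - C * exp (c * t)) :=
        (integral_one_sub_mul_exp C c hc hC0).symm
    _ ≤ ∫ t in (0 : ℝ)..T, μ.real (Iic (m - t)) :=
        intervalIntegral.integral_mono_on hT
          ((by fun_prop : Continuous fun t => 1 - C * exp (c * t)).intervalIntegrable _ _)
          (Antitone.intervalIntegrable fun s t hst =>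
            measureReal_mono (Iic_subset_Iic.2 (by linarith))) hbound
    _ = ∫ x, min (max (m - x) 0) T ∂μ := by
        rw [intervalIntegral.integral_of_le hT, htrunc.integral_eq_integral_Ioc_meas_le
          (.of_forall fun x => le_min (le_max_right _ _) hT) (.of_forall fun x => min_le_right _ _)]
        exact setIntegral_congr_fun measurableSet_Ioc fun t ht => by rw [hlevel t ht]
    _ ≤ ∫ x, max (m - x) 0 ∂μ := integral_mono htrunc hneg fun x => min_le_left _ _

theorem exp_neg_one_le_measureReal_Ici_of_le_mul_exp [IsProbabilityMeasure μ]
    (hint : Integrable id μ) (hm : ∫ x, x ∂μ = m) {c : ℝ} (hc : 0 < c)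
    (hp : 0 < μ.real (Ici m))
    (htail : ∀ t, μ.real (Ici t) ≤ μ.real (Ici m) * exp (-c * (t - m))) :
    exp (-1) ≤ μ.real (Ici m) := by
  set p := μ.real (Ici m)
  have hupper := integral_max_sub_le_of_measureReal_Ici_le hint hc fun t _ => htail t
  have hlower := le_integral_max_sub_of_measureReal_Ici_le hint hc hp measureReal_le_one
    fun t _ => htail t
  rw [integral_max_sub_eq_integral_max_sub hint hm] at hupper
  have hlog : -log p ≤ 1 := by
    have := (div_le_div_iff_of_pos_right hc).1 (hlower.trans hupper)
    linarith
  calc exp (-1) ≤ exp (log p) := exp_le_exp.2 (by linarith)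
    _ = p := exp_log hp

end Mean

theorem stmt3 (f g : ℝ → ℝ) (hg : ConvexOn ℝ Set.univ g)
    (hf : ∀ t, f t = Real.exp (-g t))
    (μ : Measure ℝ)
    (hμ : μ = MeasureTheory.volume.withDensity (fun x => ENNReal.ofReal (f x)))
    (hprob : IsProbabilityMeasure μ)
    (m : ℝ) (hm : m = ∫ x, x ∂μ) :
    ENNReal.ofReal (Real.exp (-1)) ≤ μ (Set.Ici m) := by
  subst hμ
  have hpos : ∀ x, 0 < f x := fun x => hf x ▸ exp_pos _
  have hf0 : 0 ≤ᵐ[volume] f := .of_forall fun x => (hpos x).le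
  have hfm := (continuous_of_convexOn_of_eq_exp_neg hg hf).aestronglyMeasurable (μ := volume)
  have hint : Integrable f := integrable_of_isFiniteMeasure_withDensity_ofReal hf0 hfm
  have hIci (t : ℝ) : (volume.withDensity fun x => ENNReal.ofReal (f x)).real (Ici t) =
      upperTail f t :=
    measureReal_withDensity_ofReal hf0 hfm measurableSet_Ici
  rw [← ofReal_measureReal]
  refine ENNReal.ofReal_le_ofReal (exp_neg_one_le_measureReal_Ici_of_le_mul_exp
    (integrable_id_withDensity_of_convexOn hg hf hint) hm.symm
    (div_pos (hpos m) (upperTail_pos hpos hint m)) ?_ fun t => ?_)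
  · rw [hIci]; exact upperTail_pos hpos hint m
  · simpa only [hIci] using upperTail_le_mul_exp_of_convexOn hg hf hint m t
end

section
/- Let μ be a probability measure on ℝ^d with non-vanishing log-concave density f, and for ε > 0 let D_ε = {x : f(x) ≥ ε}. Then there exist c, ε₀ > 0 such that for all ε ∈ (0, ε₀), μ(ℝ^d \ D_ε) ≤ c·ε·(log(1/ε))^d. -/
/-!
On `{f < ε}` we have `g > t := log ε⁻¹`. A convex function tending to infinity grows at least
linearly, `g x ≥ a ‖x‖ - b`. Splitting `g = (1 - 1/t) g + (1/t) g` and using `g > t` on the first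
part and the linear bound on the second gives `f x ≤ e^{1+b} ε e^{-a ‖x / t‖}` there; integrating,
the rescaling `x ↦ x / t` of `ℝ^d` produces the factor `t ^ d`.
-/

open MeasureTheory Set Filter Real Module

section ConvexGrowth

variable {E : Type*} [NormedAddCommGroup E] [NormedSpace ℝ E]

theorem ConvexOn.add_mul_norm_div_le {g : E → ℝ} (hg : ConvexOn ℝ univ g) {R c : ℝ}
    (hR : 0 < R) (hc : ∀ y, ‖y‖ = R → g 0 + c ≤ g y) {x : E} (hx : R ≤ ‖x‖) :
    g 0 + c * (‖x‖ / R) ≤ g x := by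
  have hx0 : 0 < ‖x‖ := hR.trans_le hx
  set θ := R / ‖x‖
  have hθ0 : 0 < θ := div_pos hR hx0
  have hθ1 : θ ≤ 1 := (div_le_one hx0).mpr hx
  have hθx : g 0 + c ≤ g (θ • x) := hc _ (by
    rw [norm_smul, norm_of_nonneg hθ0.le, div_mul_cancel₀ _ hx0.ne'])
  have hconv : g (θ • x) ≤ θ * g x + (1 - θ) * g 0 := by
    simpa using hg.2 (mem_univ x) (mem_univ 0) hθ0.le (by linarith) (by ring)
  have hcθ : c ≤ θ * (g x - g 0) := by linarith
  calc g 0 + c * (‖x‖ / R) = g 0 + c / θ := by simp only [θ, div_div_eq_mul_div, mul_div_assoc]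
    _ ≤ g x := by linarith [(div_le_iff₀' hθ0).mpr hcθ]

theorem ConvexOn.exists_mul_norm_sub_le [FiniteDimensional ℝ E] {g : E → ℝ}
    (hg : ConvexOn ℝ univ g) (hg_tendsto : Tendsto g (comap (‖·‖) atTop) atTop) :
    ∃ a b : ℝ, 0 < a ∧ 0 ≤ b ∧ ∀ x, a * ‖x‖ - b ≤ g x := by
  have hg_cont : Continuous g := continuousOn_univ.mp (hg.continuousOn isOpen_univ)
  obtain ⟨R₀, hR₀⟩ := eventually_atTop.mp
    (eventually_comap.mp (hg_tendsto.eventually (eventually_ge_atTop (g 0 + 1))))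
  set R := max R₀ 1
  have hR : 0 < R := zero_lt_one.trans_le (le_max_right _ _)
  have hfar : ∀ x : E, R ≤ ‖x‖ → g 0 + ‖x‖ / R ≤ g x := fun x hx => by
    simpa using hg.add_mul_norm_div_le hR
      (fun y hy => hR₀ R (le_max_left _ _) y hy) hx
  obtain ⟨z, -, hz⟩ := (isCompact_closedBall (0 : E) R).exists_isMinOn
    ⟨0, Metric.mem_closedBall_self hR.le⟩ hg_cont.continuousOn
  refine ⟨R⁻¹, |g z| + |g 0| + 1, inv_pos.mpr hR, by positivity, fun x => ?_⟩
  rcases le_or_gt ‖x‖ R with hle | hgt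
  · have hmin : g z ≤ g x := hz (mem_closedBall_zero_iff.mpr hle)
    have : R⁻¹ * ‖x‖ ≤ 1 := (inv_mul_le_iff₀ hR).mpr (by linarith)
    linarith [neg_abs_le (g z), abs_nonneg (g 0)]
  · linarith [hfar x hgt.le, neg_abs_le (g 0), abs_nonneg (g z), div_eq_inv_mul ‖x‖ R]

end ConvexGrowth

theorem integrable_exp_neg_mul_norm {E : Type*} [NormedAddCommGroup E] [NormedSpace ℝ E]
    [FiniteDimensional ℝ E] [MeasurableSpace E] [BorelSpace E] (μ : Measure E)
    [μ.IsAddHaarMeasure] {a : ℝ} (ha : 0 < a) :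
    Integrable (fun x : E => exp (-(a * ‖x‖))) μ := by
  have hr : (finrank ℝ E : ℝ) < finrank ℝ E + 1 := lt_add_one _
  have hdecay : (fun u : ℝ => exp (-(a * u))) =o[atTop] fun u => u ^ (-(finrank ℝ E + 1 : ℝ)) := by
    simpa [neg_mul] using isLittleO_exp_neg_mul_rpow_atTop ha (-(finrank ℝ E + 1 : ℝ))
  have hshift : Tendsto (fun x : E => 1 + ‖x‖) (cocompact E) atTop :=
    tendsto_atTop_add_const_left _ _ tendsto_norm_cocompact_atTop
  refine (Continuous.locallyIntegrable (by fun_prop)).integrable_of_isBigO_cocompact ?_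
    ((integrable_one_add_norm hr).integrableAtFilter _)
  have : (fun x : E => exp (-(a * ‖x‖))) = fun x => exp a * exp (-(a * (1 + ‖x‖))) := by
    ext x; rw [← exp_add]; ring_nf
  rw [this]
  exact ((hdecay.comp_tendsto hshift).isBigO).const_mul_left _

theorem toReal_withDensity_ofReal_le {α : Type*} [MeasurableSpace α] {μ : Measure α} [SFinite μ]
    {f h : α → ℝ} {s : Set α} (hh : Integrable h μ) (h0 : ∀ x, 0 ≤ h x)
    (hfh : ∀ x ∈ s, f x ≤ h x) :
    (μ.withDensity (fun x => ENNReal.ofReal (f x)) s).toReal ≤ ∫ x, h x ∂μ := by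
  refine ENNReal.toReal_le_of_le_ofReal (integral_nonneg h0) ?_
  rw [withDensity_apply', ofReal_integral_eq_lintegral_ofReal hh (ae_of_all _ h0)]
  calc ∫⁻ x in s, ENNReal.ofReal (f x) ∂μ ≤ ∫⁻ x in s, ENNReal.ofReal (h x) ∂μ :=
        setLIntegral_mono_ae hh.aemeasurable.ennreal_ofReal.restrict
          (ae_of_all _ fun x hx => ENNReal.ofReal_le_ofReal (hfh x hx))
    _ ≤ ∫⁻ x, ENNReal.ofReal (h x) ∂μ := setLIntegral_le_lintegral _ _

theorem exp_neg_le_of_lt_of_mul_sub_le {a b r t y : ℝ} (hb : 0 ≤ b) (ht : 1 ≤ t) (hty : t < y)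
    (hy : a * r - b ≤ y) : exp (-y) ≤ exp (1 + b) * exp (-t) * exp (-(a * (r / t))) := by
  rw [← exp_add, ← exp_add, exp_le_exp]
  have ht0 : 0 < t := zero_lt_one.trans_le ht
  -- `-y = -(1 - 1/t) y - (1/t) y`, bounded via `y > t` and `y ≥ a r - b` respectively
  have key : -(t * y) ≤ t * (1 + b + -t) - a * r := by nlinarith
  have := (div_le_div_iff_of_pos_right ht0).mpr key
  rw [neg_div, mul_div_cancel_left₀ _ ht0.ne', sub_div, mul_div_cancel_left₀ _ ht0.ne',
    mul_div_assoc] at this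
  linarith

theorem stmt13_general (d : ℕ) (g : EuclideanSpace ℝ (Fin d) → ℝ)
    (hgconv : ConvexOn ℝ Set.univ g)
    (hgtend : Filter.Tendsto g (Filter.comap (fun x => ‖x‖) Filter.atTop) Filter.atTop)
    (f : EuclideanSpace ℝ (Fin d) → ℝ)
    (hf : ∀ x, f x = Real.exp (-g x))
    (μ : Measure (EuclideanSpace ℝ (Fin d)))
    (hμ : μ = MeasureTheory.volume.withDensity (fun x => ENNReal.ofReal (f x))) :
    ∃ c ε₀ : ℝ, 0 < c ∧ 0 < ε₀ ∧
      ∀ ε : ℝ, ε ∈ Set.Ioo 0 ε₀ →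
        (μ {x | ε ≤ f x}ᶜ).toReal ≤ c * ε * (Real.log ε⁻¹) ^ d := by
  obtain ⟨a, b, ha, hb, hlin⟩ := hgconv.exists_mul_norm_sub_le hgtend
  have hint := integrable_exp_neg_mul_norm (volume : Measure (EuclideanSpace ℝ (Fin d))) ha
  refine ⟨exp (1 + b) * ∫ x, exp (-(a * ‖x‖)), exp (-1),
    mul_pos (exp_pos _) (integral_exp_pos hint), exp_pos _, ?_⟩
  rintro ε ⟨hε0, hε⟩
  set t := log ε⁻¹
  have hεt : ε = exp (-t) := by rw [exp_neg, exp_log (inv_pos.mpr hε0), inv_inv]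
  have ht : 1 < t := by
    rw [hεt, exp_lt_exp] at hε
    linarith
  have ht0 : 0 < t := one_pos.trans ht
  rw [hμ]
  refine (toReal_withDensity_ofReal_le ((hint.comp_smul (inv_ne_zero ht0.ne')).const_mul
    (exp (1 + b) * ε)) (fun x => by positivity) fun x hx => ?_).trans_eq ?_
  · have hgx : t < g x := by simpa [hf, hεt] using hx
    rw [hf, hεt, norm_smul, norm_inv, norm_of_nonneg ht0.le, inv_mul_eq_div]
    exact exp_neg_le_of_lt_of_mul_sub_le hb ht.le hgx (hlin x)
  · rw [integral_const_mul,
      Measure.integral_comp_inv_smul_of_nonneg volume (fun y => exp (-(a * ‖y‖))) ht0.le,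
      finrank_euclideanSpace_fin, smul_eq_mul]
    ring

theorem stmt13 (d : ℕ) (g : EuclideanSpace ℝ (Fin d) → ℝ)
    (hgconv : ConvexOn ℝ Set.univ g)
    (hgtend : Filter.Tendsto g (Filter.comap (fun x => ‖x‖) Filter.atTop) Filter.atTop)
    (f : EuclideanSpace ℝ (Fin d) → ℝ)
    (hf : ∀ x, f x = Real.exp (-g x))
    (μ : Measure (EuclideanSpace ℝ (Fin d)))
    (hμ : μ = MeasureTheory.volume.withDensity (fun x => ENNReal.ofReal (f x)))
    (hprob : IsProbabilityMeasure μ) :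
    ∃ c ε₀ : ℝ, 0 < c ∧ 0 < ε₀ ∧
      ∀ ε : ℝ, ε ∈ Set.Ioo 0 ε₀ →
        (μ {x | ε ≤ f x}ᶜ).toReal ≤ c * ε * (Real.log ε⁻¹) ^ d :=
  stmt13_general d g hgconv hgtend f hf μ hμ
end
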